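/- Let t₀ < t_f, ρ > 0, x₀ ∈ ℝ^{n_x}, let U_ad = {v ∈ ℝ^{n_u} : u_a ≤ v ≤ u_b componentwise} for given u_a ≤ u_b, and let 𝗒₁ : [t₀,t_f] × B̄_ρ(x₀) → ℝ^{n_y×n_u}, 𝗒₂ : [t₀,t_f] × B̄_ρ(x₀) → ℝ^{n_y} satisfy: 𝗒₁(t,·), 𝗒₂(t,·) continuous on B̄_ρ(x₀) for a.e. t, and ‖𝗒₁(t,x)‖_F ≤ κ₁(t), ‖𝗒₂(t,x)‖₂ ≤ κ₂(t) for a.e. t and all x ∈ B̄_ρ(x₀) with κ₁, κ₂ ∈ L²(t₀,t_f). Let x_ℓ, x̃ : [t₀,t_f] → B̄_ρ(x₀) be measurable with measurable compositions t ↦ 𝗒_j(t,x_ℓ(t)), t ↦ 𝗒_j(t,x̃(t)) (j = 1,2) and x_ℓ(t) → x̃(t) for a.e. t, and let u_ℓ, ũ ∈ L²(t₀,t_f;ℝ^{n_u}) with u_ℓ(t) ∈ U_ad a.e. and u_ℓ → ũ weakly in L². Then y_ℓ := 𝗒₁(·,x_ℓ(·))u_ℓ(·) + 𝗒₂(·,x_ℓ(·))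 converges weakly in L²(t₀,t_f;ℝ^{n_y}) to ỹ := 𝗒₁(·,x̃(·))ũ(·) + 𝗒₂(·,x̃(·)). -/

import Mathlib

/-!
Write `⟪A_ℓ u_ℓ + b_ℓ, w⟫ = ⟪u_ℓ, A_ℓᵀ w⟫ + ⟪b_ℓ, w⟫` with `A_ℓ = 𝗒₁(·, x_ℓ)`, `b_ℓ = 𝗒₂(·, x_ℓ)`.
By continuity of `𝗒ⱼ(t, ·)`, `A_ℓ → Ã` and `b_ℓ → b̃` a.e., so the second term converges by
dominated convergence, and the test functions `A_ℓᵀ w`, dominated by `κ₁ ‖w‖ ∈ L¹`, converge to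
`Ãᵀ w` in `L¹`. The box `U_ad` is bounded and, being closed and convex, contains the weak limit
`ũ` a.e.; so all `u_ℓ` and `ũ` are bounded by one constant `M`. Pairing with functions bounded
by `M` is `M`-Lipschitz in the `L¹` norm of the test function, so weak convergence of `u_ℓ`
against `L²` test functions extends, by density of simple functions in `L¹`, to `L¹` test
functions, and then also to `L¹`-convergent ones such as `A_ℓᵀ w`.
-/

open MeasureTheory Set Filter Metric Topology
open scoped RealInnerProductSpace

/-- Matrix–vector multiplication for Euclidean-space vectors. -/
noncomputable def mulVecE {m n : ℕ} (M : Matrix (Fin m) (Fin n) ℝ)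
    (v : EuclideanSpace ℝ (Fin n)) : EuclideanSpace ℝ (Fin m) :=
  (WithLp.equiv 2 (Fin m → ℝ)).symm (M.mulVec ((WithLp.equiv 2 (Fin n → ℝ)) v))

/-- Frobenius norm of a real matrix. -/
noncomputable def frobNorm {m n : ℕ} (M : Matrix (Fin m) (Fin n) ℝ) : ℝ :=
  Real.sqrt (∑ i, ∑ j, (M i j) ^ 2)

open Matrix
open scoped ENNReal

section Matrix

open scoped Matrix.Norms.Frobenius

variable {m n : ℕ}

lemma frobNorm_eq_norm (M : Matrix (Fin m) (Fin n) ℝ) : frobNorm M = ‖M‖ := by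
  rw [frobenius_norm_def, frobNorm, Real.sqrt_eq_rpow]
  simp only [Real.norm_eq_abs, Real.rpow_two, sq_abs]

lemma frobNorm_transpose (M : Matrix (Fin m) (Fin n) ℝ) : frobNorm Mᵀ = frobNorm M := by
  simp only [frobNorm_eq_norm, frobenius_norm_transpose]

lemma norm_mulVecE_le (M : Matrix (Fin m) (Fin n) ℝ) (v : EuclideanSpace ℝ (Fin n)) :
    ‖mulVecE M v‖ ≤ frobNorm M * ‖v‖ := by
  calc ‖mulVecE M v‖ = ‖replicateCol (Fin 1) (M *ᵥ v.ofLp)‖ :=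
        (frobenius_norm_replicateCol _).symm
    _ = ‖M * replicateCol (Fin 1) v.ofLp‖ := by rw [replicateCol_mulVec]
    _ ≤ ‖M‖ * ‖replicateCol (Fin 1) v.ofLp‖ := frobenius_norm_mul _ _
    _ = frobNorm M * ‖v‖ := by
      rw [← frobNorm_eq_norm]; exact congrArg _ (frobenius_norm_replicateCol _)

lemma inner_mulVecE (M : Matrix (Fin m) (Fin n) ℝ) (u : EuclideanSpace ℝ (Fin n))
    (w : EuclideanSpace ℝ (Fin m)) : ⟪mulVecE M u, w⟫ = ⟪u, mulVecE Mᵀ w⟫ := by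
  simp only [mulVecE, EuclideanSpace.inner_eq_star_dotProduct]
  simp [dotProduct_mulVec, vecMul_transpose, dotProduct_comm]

lemma continuous_mulVecE :
    Continuous fun p : Matrix (Fin m) (Fin n) ℝ × EuclideanSpace ℝ (Fin n) => mulVecE p.1 p.2 :=
  (PiLp.continuous_toLp 2 _).comp <|
    continuous_fst.matrix_mulVec ((PiLp.continuous_ofLp 2 _).comp continuous_snd)

end Matrix

section WeakConvergence

variable {α E : Type*} [MeasurableSpace α] {μ : Measure α} [NormedAddCommGroup E]

lemma MeasureTheory.Integrable.exists_simpleFunc_integral_norm_sub_lt {v : α → E}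
    (hv : Integrable v μ) {δ : ℝ} (hδ : 0 < δ) :
    ∃ g : SimpleFunc α E, MemLp g 2 μ ∧ ∫ t, ‖v t - g t‖ ∂μ < δ := by
  obtain ⟨g, hvg, hg⟩ := (memLp_one_iff_integrable.2 hv).exists_simpleFunc_eLpNorm_sub_lt
    ENNReal.one_ne_top (ENNReal.ofReal_pos.2 hδ).ne'
  refine ⟨g, (SimpleFunc.memLp_iff_integrable two_ne_zero ENNReal.ofNat_ne_top).2
    (memLp_one_iff_integrable.1 hg), ?_⟩
  rw [eLpNorm_one_eq_lintegral_enorm, ← ofReal_integral_norm_eq_lintegral_enorm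
    (hv.sub (memLp_one_iff_integrable.1 hg))] at hvg
  exact (ENNReal.ofReal_lt_ofReal_iff hδ).1 hvg

variable [InnerProductSpace ℝ E]

lemma integrable_inner_of_norm_mul_le {f g : α → E} {b : α → ℝ}
    (hf : AEStronglyMeasurable f μ) (hg : AEStronglyMeasurable g μ) (hb : Integrable b μ)
    (hfg : ∀ᵐ t ∂μ, ‖f t‖ * ‖g t‖ ≤ b t) : Integrable (fun t => ⟪f t, g t⟫) μ :=
  hb.mono' (hf.inner hg) (hfg.mono fun _ h => (norm_inner_le_norm _ _).trans h)

lemma integrable_inner_of_norm_le {u v : α → E} {M : ℝ} (hu : AEStronglyMeasurable u μ)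
    (huM : ∀ᵐ t ∂μ, ‖u t‖ ≤ M) (hv : Integrable v μ) : Integrable (fun t => ⟪u t, v t⟫) μ :=
  integrable_inner_of_norm_mul_le hu hv.1 (hv.norm.const_mul M)
    (huM.mono fun _ h => mul_le_mul_of_nonneg_right h (norm_nonneg _))

lemma norm_integral_inner_sub_le {u v v' : α → E} {M : ℝ} (hu : AEStronglyMeasurable u μ)
    (huM : ∀ᵐ t ∂μ, ‖u t‖ ≤ M) (hv : Integrable v μ) (hv' : Integrable v' μ) :
    ‖∫ t, ⟪u t, v t⟫ ∂μ - ∫ t, ⟪u t, v' t⟫ ∂μ‖ ≤ M * ∫ t, ‖v t - v' t‖ ∂μ := by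
  rw [← integral_sub (integrable_inner_of_norm_le hu huM hv)
    (integrable_inner_of_norm_le hu huM hv'), ← integral_const_mul]
  refine norm_integral_le_of_norm_le ((hv.sub hv').norm.const_mul M) ?_
  filter_upwards [huM] with _ ht
  rw [← inner_sub_right]
  exact (norm_inner_le_norm _ _).trans (mul_le_mul_of_nonneg_right ht (norm_nonneg _))

variable {U : ℕ → α → E} {u : α → E} {M : ℝ}

theorem tendsto_integral_inner_of_integrable (hU : ∀ ℓ, AEStronglyMeasurable (U ℓ) μ)
    (hu : AEStronglyMeasurable u μ) (hUM : ∀ ℓ, ∀ᵐ t ∂μ, ‖U ℓ t‖ ≤ M)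
    (huM : ∀ᵐ t ∂μ, ‖u t‖ ≤ M)
    (hweak : ∀ v : α → E, MemLp v 2 μ →
      Tendsto (fun ℓ => ∫ t, ⟪U ℓ t, v t⟫ ∂μ) atTop (𝓝 (∫ t, ⟪u t, v t⟫ ∂μ)))
    {v : α → E} (hv : Integrable v μ) :
    Tendsto (fun ℓ => ∫ t, ⟪U ℓ t, v t⟫ ∂μ) atTop (𝓝 (∫ t, ⟪u t, v t⟫ ∂μ)) := by
  rw [Metric.tendsto_atTop]
  intro ε hε
  set δ := ε / (3 * (|M| + 1))
  have hδ : 0 < δ := by positivity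
  have hMδ : (|M| + 1) * δ = ε / 3 := by simp only [δ]; field_simp
  obtain ⟨g, hg2, hvg⟩ := hv.exists_simpleFunc_integral_norm_sub_lt hδ
  have hg : Integrable g μ :=
    (SimpleFunc.memLp_iff_integrable two_ne_zero ENNReal.ofNat_ne_top).1 hg2
  obtain ⟨L, hL⟩ := Metric.tendsto_atTop.1 (hweak g hg2) (ε / 3) (by positivity)
  refine ⟨L, fun ℓ hℓ => ?_⟩
  have h₁ := norm_integral_inner_sub_le (hU ℓ) (hUM ℓ) hv hg
  have h₃ := norm_integral_inner_sub_le hu huM hv hg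
  have hMint : M * ∫ t, ‖v t - g t‖ ∂μ < ε / 3 := by
    have : 0 ≤ ∫ t, ‖v t - g t‖ ∂μ := integral_nonneg fun t => norm_nonneg _
    nlinarith [le_abs_self M, abs_nonneg M]
  calc dist (∫ t, ⟪U ℓ t, v t⟫ ∂μ) (∫ t, ⟪u t, v t⟫ ∂μ)
      ≤ dist (∫ t, ⟪U ℓ t, v t⟫ ∂μ) (∫ t, ⟪U ℓ t, g t⟫ ∂μ)
        + dist (∫ t, ⟪U ℓ t, g t⟫ ∂μ) (∫ t, ⟪u t, g t⟫ ∂μ)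
        + dist (∫ t, ⟪u t, g t⟫ ∂μ) (∫ t, ⟪u t, v t⟫ ∂μ) := dist_triangle4 _ _ _ _
    _ < ε / 3 + ε / 3 + ε / 3 := by
      rw [dist_eq_norm, dist_comm _ (∫ t, ⟪u t, v t⟫ ∂μ), dist_eq_norm]
      gcongr ?_ + ?_ + ?_
      · exact h₁.trans_lt hMint
      · exact hL ℓ hℓ
      · exact h₃.trans_lt hMint
    _ = ε := by ring

theorem tendsto_integral_inner_of_dominated (hU : ∀ ℓ, AEStronglyMeasurable (U ℓ) μ)
    (hu : AEStronglyMeasurable u μ) (hUM : ∀ ℓ, ∀ᵐ t ∂μ, ‖U ℓ t‖ ≤ M)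
    (huM : ∀ᵐ t ∂μ, ‖u t‖ ≤ M)
    (hweak : ∀ v : α → E, MemLp v 2 μ →
      Tendsto (fun ℓ => ∫ t, ⟪U ℓ t, v t⟫ ∂μ) atTop (𝓝 (∫ t, ⟪u t, v t⟫ ∂μ)))
    {V : ℕ → α → E} {v : α → E} {g : α → ℝ} (hV : ∀ ℓ, AEStronglyMeasurable (V ℓ) μ)
    (hg : Integrable g μ) (hVg : ∀ ℓ, ∀ᵐ t ∂μ, ‖V ℓ t‖ ≤ g t)
    (hVv : ∀ᵐ t ∂μ, Tendsto (fun ℓ => V ℓ t) atTop (𝓝 (v t))) :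
    Tendsto (fun ℓ => ∫ t, ⟪U ℓ t, V ℓ t⟫ ∂μ) atTop (𝓝 (∫ t, ⟪u t, v t⟫ ∂μ)) := by
  have hvg : ∀ᵐ t ∂μ, ‖v t‖ ≤ g t := by
    filter_upwards [hVv, ae_all_iff.2 hVg] with t hlim hbound
    exact le_of_tendsto' hlim.norm hbound
  have hv : Integrable v μ := hg.mono' (aestronglyMeasurable_of_tendsto_ae _ hV hVv) hvg
  have hVv_L1 : Tendsto (fun ℓ => ∫ t, ‖V ℓ t - v t‖ ∂μ) atTop (𝓝 0) := by
    have := tendsto_integral_of_dominated_convergence (fun t => g t + g t)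
      (fun ℓ => ((hV ℓ).sub hv.1).norm) (hg.add hg)
      (fun ℓ => by
        filter_upwards [hVg ℓ, hvg] with t h₁ h₂
        exact (norm_norm _).trans_le ((norm_sub_le _ _).trans (add_le_add h₁ h₂)))
      (hVv.mono fun t ht => by simpa using (ht.sub_const (v t)).norm)
    simpa using this
  have hdiff : Tendsto (fun ℓ => ∫ t, ⟪U ℓ t, V ℓ t⟫ ∂μ - ∫ t, ⟪U ℓ t, v t⟫ ∂μ) atTop (𝓝 0) :=
    squeeze_zero_norm
      (fun ℓ => norm_integral_inner_sub_le (hU ℓ) (hUM ℓ) (hg.mono' (hV ℓ) (hVg ℓ)) hv)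
      (by simpa using hVv_L1.const_mul M)
  simpa using hdiff.add (tendsto_integral_inner_of_integrable hU hu hUM huM hweak hv)

end WeakConvergence

lemma inner_indicator_single {α ι : Type*} [Fintype ι] [DecidableEq ι] {s : Set α}
    (f : α → EuclideanSpace ℝ ι) (i : ι) (t : α) :
    ⟪f t, s.indicator (fun _ => EuclideanSpace.single i 1) t⟫ = s.indicator (fun t => f t i) t := by
  by_cases ht : t ∈ s <;> simp [ht, EuclideanSpace.inner_single_right]

section Box

variable {α ι : Type*} [MeasurableSpace α] {μ : Measure α} [Fintype ι]

lemma ae_le_of_tendsto_setIntegral {F : ℕ → α → ℝ} {f g : α → ℝ}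
    (hF : ∀ ℓ, Integrable (F ℓ) μ) (hf : Integrable f μ) (hg : Integrable g μ)
    (hlim : ∀ s, MeasurableSet s → μ s < ∞ →
      Tendsto (fun ℓ => ∫ x in s, F ℓ x ∂μ) atTop (𝓝 (∫ x in s, f x ∂μ)))
    (hFg : ∀ ℓ, F ℓ ≤ᵐ[μ] g) : f ≤ᵐ[μ] g :=
  ae_le_of_forall_setIntegral_le hf hg fun s hs hμs =>
    le_of_tendsto' (hlim s hs hμs) fun ℓ =>
      setIntegral_mono_ae (hF ℓ).integrableOn hg.integrableOn (hFg ℓ)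

lemma ae_ge_of_tendsto_setIntegral {F : ℕ → α → ℝ} {f g : α → ℝ}
    (hF : ∀ ℓ, Integrable (F ℓ) μ) (hf : Integrable f μ) (hg : Integrable g μ)
    (hlim : ∀ s, MeasurableSet s → μ s < ∞ →
      Tendsto (fun ℓ => ∫ x in s, F ℓ x ∂μ) atTop (𝓝 (∫ x in s, f x ∂μ)))
    (hgF : ∀ ℓ, g ≤ᵐ[μ] F ℓ) : g ≤ᵐ[μ] f :=
  ae_le_of_forall_setIntegral_le hg hf fun s hs hμs =>
    ge_of_tendsto' (hlim s hs hμs) fun ℓ =>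
      setIntegral_mono_ae hg.integrableOn (hF ℓ).integrableOn (hgF ℓ)

lemma tendsto_setIntegral_apply_of_weak_tendsto [DecidableEq ι] {U : ℕ → α → EuclideanSpace ℝ ι}
    {u : α → EuclideanSpace ℝ ι}
    (hweak : ∀ v : α → EuclideanSpace ℝ ι, MemLp v 2 μ →
      Tendsto (fun ℓ => ∫ t, ⟪U ℓ t, v t⟫ ∂μ) atTop (𝓝 (∫ t, ⟪u t, v t⟫ ∂μ)))
    (i : ι) {s : Set α} (hs : MeasurableSet s) (hμs : μ s < ∞) :
    Tendsto (fun ℓ => ∫ t in s, U ℓ t i ∂μ) atTop (𝓝 (∫ t in s, u t i ∂μ)) := by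
  have := hweak _ (memLp_indicator_const 2 hs (EuclideanSpace.single i 1) (Or.inr hμs.ne))
  simpa only [inner_indicator_single (U _), inner_indicator_single u, integral_indicator hs]
    using this

lemma ae_mem_box_of_weak_tendsto [DecidableEq ι] [IsFiniteMeasure μ] {ua ub : EuclideanSpace ℝ ι}
    {U : ℕ → α → EuclideanSpace ℝ ι} {u : α → EuclideanSpace ℝ ι}
    (hU : ∀ ℓ, Integrable (U ℓ) μ) (hu : Integrable u μ)
    (hweak : ∀ v : α → EuclideanSpace ℝ ι, MemLp v 2 μ →
      Tendsto (fun ℓ => ∫ t, ⟪U ℓ t, v t⟫ ∂μ) atTop (𝓝 (∫ t, ⟪u t, v t⟫ ∂μ)))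
    (hUbox : ∀ ℓ, ∀ᵐ t ∂μ, ∀ i, ua i ≤ U ℓ t i ∧ U ℓ t i ≤ ub i) :
    ∀ᵐ t ∂μ, ∀ i, ua i ≤ u t i ∧ u t i ≤ ub i := by
  have hcoord : ∀ i, ∀ᵐ t ∂μ, ua i ≤ u t i ∧ u t i ≤ ub i := by
    intro i
    have hUi ℓ : Integrable (fun t => U ℓ t i) μ :=
      (EuclideanSpace.proj (𝕜 := ℝ) (ι := ι) i).integrable_comp (hU ℓ)
    have hui : Integrable (fun t => u t i) μ :=
      (EuclideanSpace.proj (𝕜 := ℝ) (ι := ι) i).integrable_comp hu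
    have hlim := fun s (hs : MeasurableSet s) (hμs : μ s < ∞) =>
      tendsto_setIntegral_apply_of_weak_tendsto hweak i hs hμs
    filter_upwards [ae_ge_of_tendsto_setIntegral hUi hui (integrable_const (ua i)) hlim
        fun ℓ => (hUbox ℓ).mono fun t ht => (ht i).1,
      ae_le_of_tendsto_setIntegral hUi hui (integrable_const (ub i)) hlim
        fun ℓ => (hUbox ℓ).mono fun t ht => (ht i).2] with t h₁ h₂
    exact ⟨h₁, h₂⟩
  exact ae_all_iff.2 hcoord

lemma EuclideanSpace.norm_le_norm_of_abs_le {x y : EuclideanSpace ℝ ι} (h : ∀ i, |x i| ≤ |y i|) :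
    ‖x‖ ≤ ‖y‖ := by
  simp only [EuclideanSpace.norm_eq, Real.norm_eq_abs]
  exact Real.sqrt_le_sqrt (Finset.sum_le_sum fun i _ => pow_le_pow_left₀ (abs_nonneg _) (h i) 2)

lemma norm_le_of_mem_box {ua ub u : EuclideanSpace ℝ ι} (h : ∀ i, ua i ≤ u i ∧ u i ≤ ub i) :
    ‖u‖ ≤ ‖ua‖ + ‖ub - ua‖ := by
  refine (norm_le_norm_add_norm_sub' u ua).trans ?_
  gcongr 1
  refine EuclideanSpace.norm_le_norm_of_abs_le fun i => ?_
  simp only [PiLp.sub_apply]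
  rw [abs_of_nonneg (sub_nonneg.2 (h i).1), abs_of_nonneg (sub_nonneg.2 ((h i).1.trans (h i).2))]
  linarith [(h i).2]

end Box

lemma ae_tendsto_comp_of_continuousOn {α X Y : Type*} [MeasurableSpace α] {μ : Measure α}
    [TopologicalSpace X] [TopologicalSpace Y] {f : α → X → Y} {s : Set X}
    {x : ℕ → α → X} {x₀ : α → X} (hf : ∀ᵐ t ∂μ, ContinuousOn (f t) s)
    (hx : ∀ ℓ t, x ℓ t ∈ s) (hx₀ : ∀ t, x₀ t ∈ s)
    (hxx₀ : ∀ᵐ t ∂μ, Tendsto (fun ℓ => x ℓ t) atTop (𝓝 (x₀ t))) :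
    ∀ᵐ t ∂μ, Tendsto (fun ℓ => f t (x ℓ t)) atTop (𝓝 (f t (x₀ t))) := by
  filter_upwards [hf, hxx₀] with t hft ht
  exact (hft _ (hx₀ t)).tendsto.comp
    (tendsto_nhdsWithin_iff.2 ⟨ht, Eventually.of_forall fun ℓ => hx ℓ t⟩)

section Nemytskii

variable {α : Type*} [MeasurableSpace α] {μ : Measure α} {m n : ℕ}

lemma MeasureTheory.AEStronglyMeasurable.mulVecE_transpose {A : α → Matrix (Fin m) (Fin n) ℝ}
    {w : α → EuclideanSpace ℝ (Fin m)} (hA : AEStronglyMeasurable A μ)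
    (hw : AEStronglyMeasurable w μ) : AEStronglyMeasurable (fun t => mulVecE (A t)ᵀ (w t)) μ :=
  continuous_mulVecE.comp_aestronglyMeasurable
    ((continuous_id.matrix_transpose.comp_aestronglyMeasurable hA).prodMk hw)

lemma ae_norm_mulVecE_transpose_le {A : α → Matrix (Fin m) (Fin n) ℝ}
    {w : α → EuclideanSpace ℝ (Fin m)} {κ : α → ℝ} (hAκ : ∀ᵐ t ∂μ, frobNorm (A t) ≤ κ t) :
    ∀ᵐ t ∂μ, ‖mulVecE (A t)ᵀ (w t)‖ ≤ κ t * ‖w t‖ :=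
  hAκ.mono fun t ht => (norm_mulVecE_le _ _).trans <| by
    rw [frobNorm_transpose]; exact mul_le_mul_of_nonneg_right ht (norm_nonneg _)

lemma integral_inner_mulVecE_add {A : α → Matrix (Fin m) (Fin n) ℝ}
    {U : α → EuclideanSpace ℝ (Fin n)} {B w : α → EuclideanSpace ℝ (Fin m)} {κ₁ κ₂ : α → ℝ}
    {M : ℝ} (hA : AEStronglyMeasurable A μ) (hU : AEStronglyMeasurable U μ)
    (hB : AEStronglyMeasurable B μ) (hw : AEStronglyMeasurable w μ)
    (hAκ : ∀ᵐ t ∂μ, frobNorm (A t) ≤ κ₁ t) (hUM : ∀ᵐ t ∂μ, ‖U t‖ ≤ M)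
    (hBκ : ∀ᵐ t ∂μ, ‖B t‖ ≤ κ₂ t) (hκ₁w : Integrable (fun t => κ₁ t * ‖w t‖) μ)
    (hκ₂w : Integrable (fun t => κ₂ t * ‖w t‖) μ) :
    ∫ t, ⟪mulVecE (A t) (U t) + B t, w t⟫ ∂μ
      = ∫ t, ⟪U t, mulVecE (A t)ᵀ (w t)⟫ ∂μ + ∫ t, ⟪B t, w t⟫ ∂μ := by
  simp only [inner_add_left, inner_mulVecE]
  refine integral_add (integrable_inner_of_norm_le hU hUM
    (hκ₁w.mono' (hA.mulVecE_transpose hw) (ae_norm_mulVecE_transpose_le hAκ))) ?_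
  exact integrable_inner_of_norm_mul_le hB hw hκ₂w
    (hBκ.mono fun t ht => mul_le_mul_of_nonneg_right ht (norm_nonneg _))

theorem tendsto_integral_inner_mulVecE_add {A : ℕ → α → Matrix (Fin m) (Fin n) ℝ}
    {a : α → Matrix (Fin m) (Fin n) ℝ} {B : ℕ → α → EuclideanSpace ℝ (Fin m)}
    {b w : α → EuclideanSpace ℝ (Fin m)} {U : ℕ → α → EuclideanSpace ℝ (Fin n)}
    {u : α → EuclideanSpace ℝ (Fin n)} {κ₁ κ₂ : α → ℝ} {M : ℝ}
    (hA : ∀ ℓ, AEStronglyMeasurable (A ℓ) μ) (ha : AEStronglyMeasurable a μ)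
    (hB : ∀ ℓ, AEStronglyMeasurable (B ℓ) μ) (hb : AEStronglyMeasurable b μ)
    (hU : ∀ ℓ, AEStronglyMeasurable (U ℓ) μ) (hu : AEStronglyMeasurable u μ)
    (hκ₁ : MemLp κ₁ 2 μ) (hκ₂ : MemLp κ₂ 2 μ) (hw : MemLp w 2 μ)
    (hAκ : ∀ ℓ, ∀ᵐ t ∂μ, frobNorm (A ℓ t) ≤ κ₁ t) (haκ : ∀ᵐ t ∂μ, frobNorm (a t) ≤ κ₁ t)
    (hBκ : ∀ ℓ, ∀ᵐ t ∂μ, ‖B ℓ t‖ ≤ κ₂ t) (hbκ : ∀ᵐ t ∂μ, ‖b t‖ ≤ κ₂ t)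
    (hUM : ∀ ℓ, ∀ᵐ t ∂μ, ‖U ℓ t‖ ≤ M) (huM : ∀ᵐ t ∂μ, ‖u t‖ ≤ M)
    (hAa : ∀ᵐ t ∂μ, Tendsto (fun ℓ => A ℓ t) atTop (𝓝 (a t)))
    (hBb : ∀ᵐ t ∂μ, Tendsto (fun ℓ => B ℓ t) atTop (𝓝 (b t)))
    (hweak : ∀ v : α → EuclideanSpace ℝ (Fin n), MemLp v 2 μ →
      Tendsto (fun ℓ => ∫ t, ⟪U ℓ t, v t⟫ ∂μ) atTop (𝓝 (∫ t, ⟪u t, v t⟫ ∂μ))) :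
    Tendsto (fun ℓ => ∫ t, ⟪mulVecE (A ℓ t) (U ℓ t) + B ℓ t, w t⟫ ∂μ) atTop
      (𝓝 (∫ t, ⟪mulVecE (a t) (u t) + b t, w t⟫ ∂μ)) := by
  have hκ₁w : Integrable (fun t => κ₁ t * ‖w t‖) μ := hκ₁.integrable_mul hw.norm
  have hκ₂w : Integrable (fun t => κ₂ t * ‖w t‖) μ := hκ₂.integrable_mul hw.norm
  have hAw : Tendsto (fun ℓ => ∫ t, ⟪U ℓ t, mulVecE (A ℓ t)ᵀ (w t)⟫ ∂μ) atTop
      (𝓝 (∫ t, ⟪u t, mulVecE (a t)ᵀ (w t)⟫ ∂μ)) :=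
    tendsto_integral_inner_of_dominated hU hu hUM huM hweak
      (fun ℓ => (hA ℓ).mulVecE_transpose hw.1) hκ₁w
      (fun ℓ => ae_norm_mulVecE_transpose_le (hAκ ℓ))
      (hAa.mono fun t ht => ((continuous_mulVecE.comp
        (continuous_id.matrix_transpose.prodMk continuous_const)).tendsto (a t)).comp ht)
  have hBw : Tendsto (fun ℓ => ∫ t, ⟪B ℓ t, w t⟫ ∂μ) atTop (𝓝 (∫ t, ⟪b t, w t⟫ ∂μ)) :=
    tendsto_integral_of_dominated_convergence _ (fun ℓ => (hB ℓ).inner hw.1) hκ₂w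
      (fun ℓ => (hBκ ℓ).mono fun t ht =>
        (norm_inner_le_norm _ _).trans (mul_le_mul_of_nonneg_right ht (norm_nonneg _)))
      (hBb.mono fun t ht => ht.inner tendsto_const_nhds)
  rw [integral_inner_mulVecE_add ha hu hb hw.1 haκ huM hbκ hκ₁w hκ₂w]
  exact (hAw.add hBw).congr fun ℓ => (integral_inner_mulVecE_add (hA ℓ) (hU ℓ) (hB ℓ) hw.1
    (hAκ ℓ) (hUM ℓ) (hBκ ℓ) hκ₁w hκ₂w).symm

end Nemytskii

theorem stmt11_general
    (nx ny nu : ℕ) (t0 tf ρ : ℝ)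
    (x0 : EuclideanSpace ℝ (Fin nx))
    (ua ub : EuclideanSpace ℝ (Fin nu))
    (Uad : Set (EuclideanSpace ℝ (Fin nu)))
    (hUad : Uad = {v | ∀ i, ua i ≤ v i ∧ v i ≤ ub i})
    (y1 : ℝ → EuclideanSpace ℝ (Fin nx) → Matrix (Fin ny) (Fin nu) ℝ)
    (y2 : ℝ → EuclideanSpace ℝ (Fin nx) → EuclideanSpace ℝ (Fin ny))
    (κ1 κ2 : ℝ → ℝ)
    (hκ1 : MemLp κ1 2 (volume.restrict (Ioc t0 tf)))
    (hκ2 : MemLp κ2 2 (volume.restrict (Ioc t0 tf)))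
    -- continuity of `𝗒₁(t,·), 𝗒₂(t,·)` on the closed ball
    (hy1cont : ∀ᵐ t ∂(volume.restrict (Ioc t0 tf)),
      ContinuousOn (fun x => y1 t x) (closedBall x0 ρ))
    (hy2cont : ∀ᵐ t ∂(volume.restrict (Ioc t0 tf)),
      ContinuousOn (fun x => y2 t x) (closedBall x0 ρ))
    -- `L²` bounds on the closed ball
    (hy1bd : ∀ᵐ t ∂(volume.restrict (Ioc t0 tf)), ∀ x ∈ closedBall x0 ρ,
      frobNorm (y1 t x) ≤ κ1 t)
    (hy2bd : ∀ᵐ t ∂(volume.restrict (Ioc t0 tf)), ∀ x ∈ closedBall x0 ρ,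
      ‖y2 t x‖ ≤ κ2 t)
    (xl : ℕ → ℝ → EuclideanSpace ℝ (Fin nx)) (xt : ℝ → EuclideanSpace ℝ (Fin nx))
    (hxlmem : ∀ ℓ, ∀ t, xl ℓ t ∈ closedBall x0 ρ)
    (hxtmem : ∀ t, xt t ∈ closedBall x0 ρ)
    (hcomp1 : ∀ ℓ,
      AEStronglyMeasurable (fun t => y1 t (xl ℓ t)) (volume.restrict (Ioc t0 tf)))
    (hcomp2 : ∀ ℓ,
      AEStronglyMeasurable (fun t => y2 t (xl ℓ t)) (volume.restrict (Ioc t0 tf)))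
    (hcomp1' : AEStronglyMeasurable (fun t => y1 t (xt t)) (volume.restrict (Ioc t0 tf)))
    (hcomp2' : AEStronglyMeasurable (fun t => y2 t (xt t)) (volume.restrict (Ioc t0 tf)))
    -- `x_ℓ(t) → x̃(t)` a.e.
    (hxconv : ∀ᵐ t ∂(volume.restrict (Ioc t0 tf)),
      Tendsto (fun ℓ => xl ℓ t) atTop (𝓝 (xt t)))
    (ul : ℕ → ℝ → EuclideanSpace ℝ (Fin nu)) (ut : ℝ → EuclideanSpace ℝ (Fin nu))
    (hul : ∀ ℓ, MemLp (ul ℓ) 2 (volume.restrict (Ioc t0 tf)))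
    (hut : MemLp ut 2 (volume.restrict (Ioc t0 tf)))
    (huladm : ∀ ℓ, ∀ᵐ t ∂(volume.restrict (Ioc t0 tf)), ul ℓ t ∈ Uad)
    -- `u_ℓ ⇀ ũ` weakly in `L²`
    (huweak : ∀ v : ℝ → EuclideanSpace ℝ (Fin nu),
      MemLp v 2 (volume.restrict (Ioc t0 tf)) →
      Tendsto (fun ℓ => ∫ t, ⟪ul ℓ t, v t⟫ ∂(volume.restrict (Ioc t0 tf))) atTop
        (𝓝 (∫ t, ⟪ut t, v t⟫ ∂(volume.restrict (Ioc t0 tf))))) :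
    -- conclusion: `y_ℓ ⇀ ỹ` weakly in `L²(t₀,t_f;ℝ^{n_y})`
    ∀ w : ℝ → EuclideanSpace ℝ (Fin ny),
      MemLp w 2 (volume.restrict (Ioc t0 tf)) →
      Tendsto (fun ℓ => ∫ t,
          ⟪mulVecE (y1 t (xl ℓ t)) (ul ℓ t) + y2 t (xl ℓ t), w t⟫
          ∂(volume.restrict (Ioc t0 tf))) atTop
        (𝓝 (∫ t, ⟪mulVecE (y1 t (xt t)) (ut t) + y2 t (xt t), w t⟫
          ∂(volume.restrict (Ioc t0 tf)))) := by
  intro w hw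
  have hulbox : ∀ ℓ, ∀ᵐ t ∂(volume.restrict (Ioc t0 tf)),
      ∀ i, ua i ≤ ul ℓ t i ∧ ul ℓ t i ≤ ub i := by
    subst hUad; exact huladm
  have hutbox := ae_mem_box_of_weak_tendsto (fun ℓ => (hul ℓ).integrable one_le_two)
    (hut.integrable one_le_two) huweak hulbox
  exact tendsto_integral_inner_mulVecE_add hcomp1 hcomp1' hcomp2 hcomp2'
    (fun ℓ => (hul ℓ).1) hut.1 hκ1 hκ2 hw (fun ℓ => hy1bd.mono fun t ht => ht _ (hxlmem ℓ t))
    (hy1bd.mono fun t ht => ht _ (hxtmem t)) (fun ℓ => hy2bd.mono fun t ht => ht _ (hxlmem ℓ t))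
    (hy2bd.mono fun t ht => ht _ (hxtmem t))
    (fun ℓ => (hulbox ℓ).mono fun _ ht => norm_le_of_mem_box ht)
    (hutbox.mono fun _ ht => norm_le_of_mem_box ht)
    (ae_tendsto_comp_of_continuousOn hy1cont hxlmem hxtmem hxconv)
    (ae_tendsto_comp_of_continuousOn hy2cont hxlmem hxtmem hxconv) huweak

/-- weak `L²` convergence of the algebraic variables
`y_ℓ = 𝗒₁(·,x_ℓ)u_ℓ + 𝗒₂(·,x_ℓ)` to `ỹ = 𝗒₁(·,x̃)ũ + 𝗒₂(·,x̃)`. -/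
theorem stmt11
    (nx ny nu : ℕ) (t0 tf ρ : ℝ) (ht : t0 < tf) (hρ : 0 < ρ)
    (x0 : EuclideanSpace ℝ (Fin nx))
    (ua ub : EuclideanSpace ℝ (Fin nu)) (hab : ∀ i, ua i ≤ ub i)
    (Uad : Set (EuclideanSpace ℝ (Fin nu)))
    (hUad : Uad = {v | ∀ i, ua i ≤ v i ∧ v i ≤ ub i})
    (y1 : ℝ → EuclideanSpace ℝ (Fin nx) → Matrix (Fin ny) (Fin nu) ℝ)
    (y2 : ℝ → EuclideanSpace ℝ (Fin nx) → EuclideanSpace ℝ (Fin ny))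
    (κ1 κ2 : ℝ → ℝ)
    (hκ1 : MemLp κ1 2 (volume.restrict (Ioc t0 tf)))
    (hκ2 : MemLp κ2 2 (volume.restrict (Ioc t0 tf)))
    -- continuity of `𝗒₁(t,·), 𝗒₂(t,·)` on the closed ball
    (hy1cont : ∀ᵐ t ∂(volume.restrict (Ioc t0 tf)),
      ContinuousOn (fun x => y1 t x) (closedBall x0 ρ))
    (hy2cont : ∀ᵐ t ∂(volume.restrict (Ioc t0 tf)),
      ContinuousOn (fun x => y2 t x) (closedBall x0 ρ))
    -- `L²` bounds on the closed ball
    (hy1bd : ∀ᵐ t ∂(volume.restrict (Ioc t0 tf)), ∀ x ∈ closedBall x0 ρ,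
      frobNorm (y1 t x) ≤ κ1 t)
    (hy2bd : ∀ᵐ t ∂(volume.restrict (Ioc t0 tf)), ∀ x ∈ closedBall x0 ρ,
      ‖y2 t x‖ ≤ κ2 t)
    (xl : ℕ → ℝ → EuclideanSpace ℝ (Fin nx)) (xt : ℝ → EuclideanSpace ℝ (Fin nx))
    (hxlmem : ∀ ℓ, ∀ t, xl ℓ t ∈ closedBall x0 ρ)
    (hxtmem : ∀ t, xt t ∈ closedBall x0 ρ)
    (hxlmeas : ∀ ℓ, Measurable (xl ℓ)) (hxtmeas : Measurable xt)
    (hcomp1 : ∀ ℓ,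
      AEStronglyMeasurable (fun t => y1 t (xl ℓ t)) (volume.restrict (Ioc t0 tf)))
    (hcomp2 : ∀ ℓ,
      AEStronglyMeasurable (fun t => y2 t (xl ℓ t)) (volume.restrict (Ioc t0 tf)))
    (hcomp1' : AEStronglyMeasurable (fun t => y1 t (xt t)) (volume.restrict (Ioc t0 tf)))
    (hcomp2' : AEStronglyMeasurable (fun t => y2 t (xt t)) (volume.restrict (Ioc t0 tf)))
    -- `x_ℓ(t) → x̃(t)` a.e.
    (hxconv : ∀ᵐ t ∂(volume.restrict (Ioc t0 tf)),
      Tendsto (fun ℓ => xl ℓ t) atTop (𝓝 (xt t)))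
    (ul : ℕ → ℝ → EuclideanSpace ℝ (Fin nu)) (ut : ℝ → EuclideanSpace ℝ (Fin nu))
    (hul : ∀ ℓ, MemLp (ul ℓ) 2 (volume.restrict (Ioc t0 tf)))
    (hut : MemLp ut 2 (volume.restrict (Ioc t0 tf)))
    (huladm : ∀ ℓ, ∀ᵐ t ∂(volume.restrict (Ioc t0 tf)), ul ℓ t ∈ Uad)
    -- `u_ℓ ⇀ ũ` weakly in `L²`
    (huweak : ∀ v : ℝ → EuclideanSpace ℝ (Fin nu),
      MemLp v 2 (volume.restrict (Ioc t0 tf)) →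
      Tendsto (fun ℓ => ∫ t, ⟪ul ℓ t, v t⟫ ∂(volume.restrict (Ioc t0 tf))) atTop
        (𝓝 (∫ t, ⟪ut t, v t⟫ ∂(volume.restrict (Ioc t0 tf))))) :
    -- conclusion: `y_ℓ ⇀ ỹ` weakly in `L²(t₀,t_f;ℝ^{n_y})`
    ∀ w : ℝ → EuclideanSpace ℝ (Fin ny),
      MemLp w 2 (volume.restrict (Ioc t0 tf)) →
      Tendsto (fun ℓ => ∫ t,
          ⟪mulVecE (y1 t (xl ℓ t)) (ul ℓ t) + y2 t (xl ℓ t), w t⟫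
          ∂(volume.restrict (Ioc t0 tf))) atTop
        (𝓝 (∫ t, ⟪mulVecE (y1 t (xt t)) (ut t) + y2 t (xt t), w t⟫
          ∂(volume.restrict (Ioc t0 tf)))) :=
  stmt11_general nx ny nu t0 tf ρ x0 ua ub Uad hUad y1 y2 κ1 κ2 hκ1 hκ2 hy1cont hy2cont hy1bd hy2bd
    xl xt hxlmem hxtmem hcomp1 hcomp2 hcomp1' hcomp2' hxconv ul ut hul hut huladm huweak
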